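/- For j ≥ 1, 0 < α < 1, and 0 < β < 1, the maximum over 0 ≤ t ≤ (j-1)β of the function t ↦ 2t + 2 - 2αj/(j - t) equals ρ̂_j(α, β); the maximizer is t = (j-1)β when β ≤ 1 + (1-√(jα))/(j-1), and t = j - √(jα) otherwise. -/
import Mathlib


/-- The exponent `ρ̂_j(α, β)` from Theorem 1 of the paper. -/
noncomputable def rhoHat (j : ℕ) (α β : ℝ) : ℝ :=
  if β ≤ 1 + (1 - Real.sqrt (j * α)) / ((j : ℝ) - 1) then
    2 + 2 * ((j : ℝ) - 1) * β - 2 * j * α / ((1 - β) * ((j : ℝ) - 1) + 1)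
  else
    2 * ((j : ℝ) + 1 - 2 * Real.sqrt (j * α))

private lemma rhoHat_aux (α J s t : ℝ) (hs : s < J) (ht : t < J)
    (h : 0 ≤ (s - t) * ((J - s) * (J - t) - α * J)) :
    2 * t + 2 - 2 * α * J / (J - t) ≤ 2 * s + 2 - 2 * α * J / (J - s) := by
  have hJs : 0 < J - s := by linarith
  have hJt : 0 < J - t := by linarith
  have e : (2 * s + 2 - 2 * α * J / (J - s)) - (2 * t + 2 - 2 * α * J / (J - t))
      = 2 * ((s - t) * ((J - s) * (J - t) - α * J)) / ((J - s) * (J - t)) := by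
    field_simp
    ring
  have hpos : 0 ≤ 2 * ((s - t) * ((J - s) * (J - t) - α * J)) / ((J - s) * (J - t)) :=
    div_nonneg (by linarith) (le_of_lt (mul_pos hJs hJt))
  linarith

set_option maxHeartbeats 1000000 in
/-- `max_{0 ≤ t ≤ (j-1)β} (2t + 2 - 2αj/(j-t)) = ρ̂_j(α,β)`,
with maximizer `t = (j-1)β` when `β ≤ 1 + (1-√(jα))/(j-1)` and
`t = j - √(jα)` otherwise. -/
theorem rhoHat_is_max (j : ℕ) (hj : 1 ≤ j) (α β : ℝ)
    (hα0 : 0 < α) (hα1 : α < 1) (hβ0 : 0 < β) (hβ1 : β < 1) :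
    IsGreatest
      ((fun t : ℝ => 2 * t + 2 - 2 * α * j / ((j : ℝ) - t)) ''
        Set.Icc 0 (((j : ℝ) - 1) * β))
      (rhoHat j α β) ∧
    (β ≤ 1 + (1 - Real.sqrt (j * α)) / ((j : ℝ) - 1) →
      2 * (((j : ℝ) - 1) * β) + 2 - 2 * α * j / ((j : ℝ) - ((j : ℝ) - 1) * β) =
        rhoHat j α β) ∧
    (1 + (1 - Real.sqrt (j * α)) / ((j : ℝ) - 1) ≤ β →
      ((j : ℝ) - Real.sqrt (j * α)) ∈ Set.Icc (0 : ℝ) (((j : ℝ) - 1) * β) ∧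
      2 * ((j : ℝ) - Real.sqrt (j * α)) + 2 -
          2 * α * j / ((j : ℝ) - ((j : ℝ) - Real.sqrt (j * α))) =
        rhoHat j α β) := by
  simp only [rhoHat]
  have hJ1 : (1:ℝ) ≤ (j:ℝ) := by exact_mod_cast hj
  set J : ℝ := (j:ℝ) with hJdef
  set c : ℝ := Real.sqrt (J * α) with hcdef
  have hJpos : (0:ℝ) < J := by linarith
  have hcpos : 0 < c := Real.sqrt_pos.2 (by positivity)
  have hcsq : c ^ 2 = J * α := Real.sq_sqrt (by positivity)
  have hcltJ : c < J := by nlinarith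
  have hsnn : 0 ≤ (J - 1) * β := mul_nonneg (by linarith) hβ0.le
  have hsltJ : (J - 1) * β < J := by nlinarith
  have h2c : 2 * α * J / c = 2 * c := by
    rw [div_eq_iff hcpos.ne']; nlinarith
  have eq2 : 2 * (J - c) + 2 - 2 * α * J / (J - (J - c)) = 2 * (J + 1 - 2 * c) := by
    rw [show J - (J - c) = c by ring, h2c]; ring
  have eq1 : 2 * ((J - 1) * β) + 2 - 2 * α * J / (J - (J - 1) * β)
      = 2 + 2 * (J - 1) * β - 2 * J * α / ((1 - β) * (J - 1) + 1) := by
    rw [show (1 - β) * (J - 1) + 1 = J - (J - 1) * β by ring]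
    ring
  by_cases hcond : β ≤ 1 + (1 - c) / (J - 1)
  · -- branch 1
    have hkey : (J - 1) * β ≤ J - c := by
      rcases eq_or_lt_of_le hJ1 with h1 | h1
      · have hz : J - 1 = 0 := by linarith
        rw [hz, zero_mul]; linarith
      · have h' := (le_div_iff₀ (by linarith : (0:ℝ) < J - 1)).1
          (by linarith : β - 1 ≤ (1 - c) / (J - 1))
        nlinarith
    rw [if_pos hcond]
    refine ⟨⟨⟨(J - 1) * β, ⟨hsnn, le_refl _⟩, eq1⟩, ?_⟩, fun _ => eq1, fun h3 => ?_⟩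
    · rintro v ⟨t, ⟨ht0, ht1⟩, rfl⟩
      rw [← eq1]
      apply rhoHat_aux _ _ _ _ hsltJ (by linarith)
      have hJs : c ≤ J - (J - 1) * β := by linarith
      have hJt : c ≤ J - t := by linarith
      apply mul_nonneg (by linarith)
      nlinarith
    · -- both conditions hold: equality case
      have hJgt : 1 < J := by
        rcases eq_or_lt_of_le hJ1 with h1 | h1
        · exfalso
          have hz : J - 1 = 0 := by linarith
          rw [hz, div_zero] at h3
          linarith
        · exact h1
      have h' := (div_le_iff₀ (by linarith : (0:ℝ) < J - 1)).1
        (by linarith : (1 - c) / (J - 1) ≤ β - 1)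
      have h'' : J - c ≤ (J - 1) * β := by nlinarith
      have heq : (J - 1) * β = J - c := le_antisymm hkey h''
      refine ⟨⟨by linarith, by linarith⟩, ?_⟩
      have hd : J - (J - 1) * β = c := by linarith
      rw [show (1 - β) * (J - 1) + 1 = J - (J - 1) * β by ring, hd,
        show J - (J - c) = c by ring,
        show (2:ℝ) * J * α = 2 * α * J by ring, h2c]
      linarith
  · -- branch 2
    have hlt : 1 + (1 - c) / (J - 1) < β := not_le.1 hcond
    have hJgt : 1 < J := by
      rcases eq_or_lt_of_le hJ1 with h1 | h1
      · exfalso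
        have hz : J - 1 = 0 := by linarith
        rw [hz, div_zero] at hlt
        linarith
      · exact h1
    have h' := (div_le_iff₀ (by linarith : (0:ℝ) < J - 1)).1
      (by linarith : (1 - c) / (J - 1) ≤ β - 1)
    have hkey2 : J - c ≤ (J - 1) * β := by nlinarith
    rw [if_neg hcond]
    refine ⟨⟨⟨J - c, ⟨by linarith, hkey2⟩, eq2⟩, ?_⟩, fun h2 => absurd h2 hcond,
      fun _ => ⟨⟨by linarith, hkey2⟩, eq2⟩⟩
    rintro v ⟨t, ⟨ht0, ht1⟩, rfl⟩
    rw [← eq2]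
    apply rhoHat_aux _ _ _ _ (by linarith) (by linarith)
    nlinarith [mul_nonneg hcpos.le (sq_nonneg (J - c - t))]
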